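/- Let [b,i] and [b',i] be intervals in the homology or boundary barcode of F_i with b ≺ b' and b' < b, and let W, W' be wire bundles generating representatives for them. Assume W̄ = {w_j ∈ W | j < b} is a boundary bundle alive till b. Then for each α with b' ≤ α < b, the cycle at index α generated by W ⊞ W' is homologous in K_α to the cycle z'_α of the representative generated by W', and consequently W ⊞ W' generates a representative for [b',i]. -/

import Mathlib

/-- A simplex is a finite set of (natural-number) vertices. -/
abbrev Simplex : Type := Finset ℕ

/-- A chain over ℤ/2 (all degrees together) is a finitely supported
function from simplices to ℤ/2. -/
abbrev Chain : Type := Simplex →₀ ZMod 2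

/-- A (finite) simplicial complex: a finite set of simplices closed under faces. -/
def IsComplex (K : Finset Simplex) : Prop := ∀ s ∈ K, ∀ t ⊆ s, t ∈ K

/-- Boundary of a single simplex over ℤ/2. -/
noncomputable def bdrySimplex (s : Simplex) : Chain :=
  ∑ x ∈ s, Finsupp.single (s.erase x) 1

/-- The boundary operator on chains (all degrees), over ℤ/2. -/
noncomputable def bdry : Chain →ₗ[ZMod 2] Chain :=
  Finsupp.lsum (ZMod 2) fun s => LinearMap.toSpanSingleton (ZMod 2) Chain (bdrySimplex s)

/-- The chain group of a complex `K`: chains supported on `K`. -/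
noncomputable def chainsOf (K : Finset Simplex) : Submodule (ZMod 2) Chain :=
  Finsupp.supported (ZMod 2) (ZMod 2) (↑K : Set Simplex)

/-- The cycle group `Z(K)` (all degrees). -/
noncomputable def cyclesOf (K : Finset Simplex) : Submodule (ZMod 2) Chain :=
  chainsOf K ⊓ LinearMap.ker bdry

/-- The boundary group `B(K)` (all degrees). -/
noncomputable def bdriesOf (K : Finset Simplex) : Submodule (ZMod 2) Chain :=
  Submodule.map bdry (chainsOf K)

theorem chainsOf_mono {K K' : Finset Simplex} (h : K ⊆ K') : chainsOf K ≤ chainsOf K' :=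
  Finsupp.supported_mono (by exact_mod_cast h)

theorem cyclesOf_mono {K K' : Finset Simplex} (h : K ⊆ K') : cyclesOf K ≤ cyclesOf K' :=
  inf_le_inf_right _ (chainsOf_mono h)

theorem bdriesOf_mono {K K' : Finset Simplex} (h : K ⊆ K') : bdriesOf K ≤ bdriesOf K' :=
  Submodule.map_mono (chainsOf_mono h)

/-- `B(K)` viewed inside `Z(K)`. -/
noncomputable def homologyRel (K : Finset Simplex) : Submodule (ZMod 2) (cyclesOf K) :=
  (bdriesOf K).comap (cyclesOf K).subtype

/-- The homology `H(K) = Z(K)/B(K)` over ℤ/2, all degrees summed. -/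
noncomputable abbrev homology (K : Finset Simplex) :=
  cyclesOf K ⧸ homologyRel K

/-- The inclusion-induced map on homology. -/
noncomputable def inducedH {K K' : Finset Simplex} (h : K ⊆ K') :
    homology K →ₗ[ZMod 2] homology K' :=
  Submodule.mapQ _ _ (Submodule.inclusion (cyclesOf_mono h)) (by
    intro x hx
    simp only [homologyRel, Submodule.mem_comap, Submodule.coe_subtype,
      Submodule.coe_inclusion] at hx ⊢
    exact bdriesOf_mono h hx)

open Classical in
/-- The homology class of a chain (zero if the chain is not a cycle of `K`). -/
noncomputable def hclass (K : Finset Simplex) (c : Chain) : homology K :=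
  if h : c ∈ cyclesOf K then Submodule.Quotient.mk ⟨c, h⟩ else 0

/-- A simplex-wise zigzag filtration of length `m` starting at the empty complex:
each arrow inserts or deletes exactly one simplex. -/
structure ZZ (m : ℕ) where
  K : ℕ → Finset Simplex
  cpx : ∀ j, IsComplex (K j)
  empty0 : K 0 = ∅
  step : ∀ j < m, (∃ σ, σ ∉ K j ∧ K (j+1) = insert σ (K j)) ∨
                  (∃ σ, σ ∉ K (j+1) ∧ K j = insert σ (K (j+1)))

/-- Homology representative for the interval `[b,d]` of the zigzag module of `F_i`
(Definition of homology representatives). -/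
def IsHRep {m : ℕ} (F : ZZ m) (i b d : ℕ) (z : ℕ → Chain) : Prop :=
  1 ≤ b ∧ b ≤ d ∧ d ≤ i ∧ i ≤ m ∧
  (∀ α, b ≤ α → α ≤ d → z α ∈ cyclesOf (F.K α)) ∧
  (∀ α, b ≤ α → α < d →
    (F.K α ⊆ F.K (α+1) → z α + z (α+1) ∈ bdriesOf (F.K (α+1))) ∧
    (F.K (α+1) ⊆ F.K α → z α + z (α+1) ∈ bdriesOf (F.K α))) ∧
  ((F.K (b-1) ⊆ F.K b → z b ∉ cyclesOf (F.K (b-1))) ∧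
   (F.K b ⊆ F.K (b-1) → z b ∈ bdriesOf (F.K (b-1)) ∧ z b ∉ bdriesOf (F.K b))) ∧
  (d < i →
    (F.K (d+1) ⊆ F.K d → z d ∉ cyclesOf (F.K (d+1))) ∧
    (F.K d ⊆ F.K (d+1) → z d ∈ bdriesOf (F.K (d+1)) ∧ z d ∉ bdriesOf (F.K d)))

/-- Boundary representative for the interval `[b,d]` of the boundary zigzag module of `F_i`. -/
def IsBRep {m : ℕ} (F : ZZ m) (i b d : ℕ) (z : ℕ → Chain) : Prop :=
  1 ≤ b ∧ b ≤ d ∧ d ≤ i ∧ i ≤ m ∧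
  (∀ α, b ≤ α → α ≤ d → z α ∈ bdriesOf (F.K α)) ∧
  (∀ α, b ≤ α → α < d → z (α+1) = z α) ∧
  (F.K (b-1) ⊆ F.K b ∧ z b ∉ bdriesOf (F.K (b-1))) ∧
  (d < i → F.K (d+1) ⊆ F.K d ∧ z d ∉ bdriesOf (F.K (d+1)))

/-- `j ∈ P^H(F_i)`: homology birth index. -/
def HBirthAt {m : ℕ} (F : ZZ m) (i j : ℕ) : Prop :=
  1 ≤ j ∧ j ≤ i ∧ i ≤ m ∧
  ((∃ h : F.K (j-1) ⊆ F.K j, Function.Injective (inducedH h)) ∨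
   (∃ h : F.K j ⊆ F.K (j-1), Function.Surjective (inducedH h)))

/-- `j ∈ P^B(F_i)`: boundary birth index. -/
def BBirthAt {m : ℕ} (F : ZZ m) (i j : ℕ) : Prop :=
  1 ≤ j ∧ j ≤ i ∧ i ≤ m ∧ F.K (j-1) ⊆ F.K j ∧ bdriesOf (F.K (j-1)) ≠ bdriesOf (F.K j)

/-- `j ∈ N^H(F_i)` for `j < i` (the arrow at `j` kills a homology class). -/
def HDeathAt {m : ℕ} (F : ZZ m) (i j : ℕ) : Prop :=
  j < i ∧ i ≤ m ∧
  ((∃ h : F.K j ⊆ F.K (j+1), ¬ Function.Injective (inducedH h)) ∨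
   (∃ h : F.K (j+1) ⊆ F.K j, ¬ Function.Surjective (inducedH h)))

/-- `j ∈ N^B(F_i)` for `j < i` (the arrow at `j` kills a boundary class). -/
def BDeathAt {m : ℕ} (F : ZZ m) (i j : ℕ) : Prop :=
  j < i ∧ i ≤ m ∧
  ∃ _ : F.K (j+1) ⊆ F.K j, bdriesOf (F.K (j+1)) ≠ bdriesOf (F.K j)

/-- The total order `≺` on birth indices (Definition of the total order). -/
def Prec {m : ℕ} (F : ZZ m) (i b b' : ℕ) : Prop :=
  (BBirthAt F i b ∧ HBirthAt F i b') ∨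
  (BBirthAt F i b ∧ BBirthAt F i b' ∧ b < b') ∨
  (HBirthAt F i b ∧ HBirthAt F i b' ∧ b < b' ∧ F.K (b'-1) ⊆ F.K b') ∨
  (HBirthAt F i b ∧ HBirthAt F i b' ∧ b' < b ∧ F.K b ⊆ F.K (b-1))

/-- A wire at index `i` (Definition of wires). -/
def IsWire {m : ℕ} (F : ZZ m) (i : ℕ) (c : Chain) : Prop :=
  1 ≤ i ∧ i ≤ m ∧ c ∈ cyclesOf (F.K i) ∧
  ((F.K (i-1) ⊆ F.K i ∧ c ∉ cyclesOf (F.K (i-1))) ∨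
   (F.K i ⊆ F.K (i-1) ∧ c ∈ bdriesOf (F.K (i-1)) ∧ c ∉ bdriesOf (F.K i)) ∨
   (F.K (i-1) ⊆ F.K i ∧ c ∈ bdriesOf (F.K i) ∧ c ∉ bdriesOf (F.K (i-1))))

/-- Partial sum of the wires in the bundle `W` whose starting index is `≤ α`. -/
noncomputable def psum (w : ℕ → Chain) (W : Finset ℕ) (α : ℕ) : Chain :=
  ∑ j ∈ W.filter (· ≤ α), w j

/-- A boundary bundle `W` (with wires `w`) alive till index `b`. -/
def AliveTill {m : ℕ} (F : ZZ m) (w : ℕ → Chain) (W : Finset ℕ) (b : ℕ) : Prop :=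
  ∀ α ≤ b, psum w W α ∈ bdriesOf (F.K α)

/-- `S` (with representatives `z`) is the homology barcode `Pers^H(F_i)`:
each interval carries a representative and, at every index `j`, the classes of the
representative cycles of the intervals containing `j` form a basis of `H(K_j)`. -/
def IsHBarcode {m : ℕ} (F : ZZ m) (i : ℕ) (S : Finset (ℕ × ℕ))
    (z : ℕ × ℕ → ℕ → Chain) : Prop :=
  (∀ q ∈ S, IsHRep F i q.1 q.2 (z q)) ∧
  ∀ j ≤ i,
    LinearIndependent (ZMod 2)
      (fun q : {q : ℕ × ℕ // q ∈ S ∧ q.1 ≤ j ∧ j ≤ q.2} => hclass (F.K j) (z q.val j)) ∧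
    Submodule.span (ZMod 2)
      (Set.range (fun q : {q : ℕ × ℕ // q ∈ S ∧ q.1 ≤ j ∧ j ≤ q.2} =>
        hclass (F.K j) (z q.val j))) = ⊤

/-- `S` (with representatives `z`) is the boundary barcode `Pers^B(F_i)`. -/
def IsBBarcode {m : ℕ} (F : ZZ m) (i : ℕ) (S : Finset (ℕ × ℕ))
    (z : ℕ × ℕ → ℕ → Chain) : Prop :=
  (∀ q ∈ S, IsBRep F i q.1 q.2 (z q)) ∧
  ∀ j ≤ i,
    LinearIndependent (ZMod 2)
      (fun q : {q : ℕ × ℕ // q ∈ S ∧ q.1 ≤ j ∧ j ≤ q.2} => z q.val j) ∧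
    Submodule.span (ZMod 2)
      (Set.range (fun q : {q : ℕ × ℕ // q ∈ S ∧ q.1 ≤ j ∧ j ≤ q.2} =>
        z q.val j)) = bdriesOf (F.K j)

/-! Over `ℤ/2` the chain generated by `W ⊞ W'` is `z_W + z_{W'}`. Below `b` every `z_W α` is a
boundary because `W̄` is alive till `b`; this gives the homology statement and makes `z_W`
invisible at the birth index `b'` of `W'`. From `b` on, `z_W` is a representative itself, and
`b ≺ b'` with `b' < b` forces `z_W b` to be a boundary on the larger side of the arrow at `b`: a
homology class cannot be born at a boundary birth, and a backward homology birth is a boundary of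
`K_{b-1}`. So `z_W` is a family of cycles homologous across every arrow of `[b', i]` that is a
boundary at `b'`, and adding such a family to a representative of `[b', i]` yields another one. -/

lemma Finset.sum_symmDiff_of_zmod_two {ι G : Type*} [DecidableEq ι] [AddCommGroup G]
    [Module (ZMod 2) G] (s t : Finset ι) (f : ι → G) :
    ∑ j ∈ symmDiff s t, f j = ∑ j ∈ s, f j + ∑ j ∈ t, f j := by
  rw [Finset.symmDiff_def, Finset.sum_union disjoint_sdiff_sdiff,
    ← ZModModule.sub_eq_add (∑ j ∈ s \ t, f j), Finset.sum_sdiff_sub_sum_sdiff,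
    ZModModule.sub_eq_add]

lemma psum_symmDiff (w : ℕ → Chain) (W W' : Finset ℕ) (α : ℕ) :
    psum w (symmDiff W W') α = psum w W α + psum w W' α := by
  classical
  simp only [psum, Finset.sum_filter]
  exact Finset.sum_symmDiff_of_zmod_two W W' _

lemma psum_filter_lt (w : ℕ → Chain) (W : Finset ℕ) {α b : ℕ} (h : α < b) :
    psum w (W.filter (· < b)) α = psum w W α := by
  rw [psum, psum, Finset.filter_filter]
  congr 1
  exact Finset.filter_congr fun j _ => ⟨And.right, fun hj => ⟨by omega, hj⟩⟩

section ChainComplex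

variable {K L : Finset Simplex} {σ : Simplex}

lemma bdry_single (s : Simplex) (a : ZMod 2) :
    bdry (Finsupp.single s a) = a • bdrySimplex s := by
  simp [bdry, LinearMap.toSpanSingleton_apply]

lemma bdry_bdrySimplex (s : Simplex) : bdry (bdrySimplex s) = 0 := by
  simp only [bdrySimplex, map_sum, bdry_single, one_smul]
  rw [Finset.sum_sigma']
  -- the face `s ∖ {x, y}` appears once for `(x, y)` and once for `(y, x)`
  refine Finset.sum_involution (fun p _ => ⟨p.2, p.1⟩) (fun p _ => ?_) (fun p hp _ h => ?_)
    (fun p hp => ?_) (fun _ _ => rfl)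
  · rw [Finset.erase_right_comm, ZModModule.add_self]
  · exact Finset.ne_of_mem_erase (Finset.mem_sigma.1 hp).2 (congrArg Sigma.fst h)
  · obtain ⟨hx, hy⟩ := Finset.mem_sigma.1 hp
    simp [Finset.mem_of_mem_erase hy, (Finset.ne_of_mem_erase hy).symm, hx]

lemma bdry_bdry (c : Chain) : bdry (bdry c) = 0 := by
  induction c using Finsupp.induction_linear with
  | zero => simp
  | add f g hf hg => rw [map_add, map_add, hf, hg, add_zero]
  | single s a => rw [bdry_single, map_smul, bdry_bdrySimplex, smul_zero]

lemma chainsOf_le_comap_bdry (hKL : ∀ s ∈ K, ∀ x ∈ s, s.erase x ∈ L) :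
    chainsOf K ≤ (chainsOf L).comap bdry := by
  rw [chainsOf, Finsupp.supported_eq_span_single, Submodule.span_le]
  rintro _ ⟨s, hs, rfl⟩
  rw [SetLike.mem_coe, Submodule.mem_comap, bdry_single, one_smul]
  exact Submodule.sum_mem _ fun x hx => Finsupp.single_mem_supported _ _ (hKL s hs x hx)

lemma bdriesOf_le_cyclesOf_of_faces (hKL : ∀ s ∈ K, ∀ x ∈ s, s.erase x ∈ L) :
    bdriesOf K ≤ cyclesOf L := by
  rintro _ ⟨c, hc, rfl⟩
  exact ⟨chainsOf_le_comap_bdry hKL hc, LinearMap.mem_ker.2 (bdry_bdry c)⟩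

lemma bdriesOf_le_cyclesOf (hK : IsComplex K) : bdriesOf K ≤ cyclesOf K :=
  bdriesOf_le_cyclesOf_of_faces fun s hs x _ => hK s hs _ (Finset.erase_subset x s)

lemma bdriesOf_insert_le_cyclesOf (hK : IsComplex K) (hK' : IsComplex (insert σ K))
    (hσ : σ ∉ K) : bdriesOf (insert σ K) ≤ cyclesOf K := by
  refine bdriesOf_le_cyclesOf_of_faces fun s hs x hx => ?_
  refine (Finset.mem_insert.1 (hK' s hs _ (Finset.erase_subset x s))).resolve_left fun hface => ?_
  rcases Finset.mem_insert.1 hs with rfl | hsK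
  · exact Finset.erase_eq_self.1 hface hx
  · exact hσ (hface ▸ hK s hsK _ (Finset.erase_subset x s))

lemma chainsOf_insert (σ : Simplex) (K : Finset Simplex) :
    chainsOf (insert σ K) = chainsOf K ⊔ (ZMod 2) ∙ Finsupp.single σ 1 := by
  rw [chainsOf, chainsOf, Finset.coe_insert, Set.insert_eq, Finsupp.supported_union, sup_comm,
    Finsupp.supported_eq_span_single (ZMod 2) {σ}, Set.image_singleton]

lemma bdriesOf_insert (σ : Simplex) (K : Finset Simplex) :
    bdriesOf (insert σ K) = bdriesOf K ⊔ (ZMod 2) ∙ bdrySimplex σ := by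
  rw [bdriesOf, chainsOf_insert, Submodule.map_sup, Submodule.map_span, Set.image_singleton,
    bdry_single, one_smul, bdriesOf]

lemma bdrySimplex_notMem_bdriesOf_of_ne (h : bdriesOf K ≠ bdriesOf (insert σ K)) :
    bdrySimplex σ ∉ bdriesOf K := fun hσ =>
  h (by rw [bdriesOf_insert, sup_eq_left.2 ((Submodule.span_singleton_le_iff_mem _ _).2 hσ)])

lemma cyclesOf_insert_le (hσ : bdrySimplex σ ∉ bdriesOf K) :
    cyclesOf (insert σ K) ≤ cyclesOf K := by
  intro _ hz
  obtain ⟨hz, hker⟩ := Submodule.mem_inf.1 hz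
  rw [chainsOf_insert, Submodule.mem_sup] at hz
  obtain ⟨c, hc, _, ht, rfl⟩ := hz
  obtain ⟨a, rfl⟩ := Submodule.mem_span_singleton.1 ht
  have hrel : bdry c + a • bdrySimplex σ = 0 := by
    simpa [map_add, map_smul, bdry_single] using hker
  obtain rfl : a = 0 := by
    by_contra ha
    refine hσ ?_
    rw [← inv_smul_smul₀ ha (bdrySimplex σ), eq_neg_of_add_eq_zero_right hrel]
    exact Submodule.smul_mem _ _ (Submodule.neg_mem _ ⟨c, hc, rfl⟩)
  rw [zero_smul, add_zero] at hker ⊢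
  exact ⟨hc, hker⟩

end ChainComplex

namespace ZZ

variable {m : ℕ} (F : ZZ m) {b : ℕ}

lemma pred_ne (h1 : 1 ≤ b) (hbm : b ≤ m) : F.K (b-1) ≠ F.K b := by
  have hstep := F.step (b-1) (by omega)
  rw [Nat.sub_add_cancel h1] at hstep
  rcases hstep with ⟨σ, hσ, he⟩ | ⟨σ, hσ, he⟩ <;>
    exact fun heq => hσ (heq ▸ he ▸ Finset.mem_insert_self σ _)

lemma exists_insert_pred (h1 : 1 ≤ b) (hbm : b ≤ m) (hsub : F.K (b-1) ⊆ F.K b) :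
    ∃ σ ∉ F.K (b-1), F.K b = insert σ (F.K (b-1)) := by
  have hstep := F.step (b-1) (by omega)
  rw [Nat.sub_add_cancel h1] at hstep
  rcases hstep with ⟨σ, hσ, he⟩ | ⟨σ, hσ, he⟩
  · exact ⟨σ, hσ, he⟩
  · exact absurd (hsub (he ▸ Finset.mem_insert_self σ _)) hσ

end ZZ

section ZigzagCycles

variable {m : ℕ} (F : ZZ m)

def StepHomologous (z : ℕ → Chain) (α : ℕ) : Prop :=
  (F.K α ⊆ F.K (α+1) → z α + z (α+1) ∈ bdriesOf (F.K (α+1))) ∧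
  (F.K (α+1) ⊆ F.K α → z α + z (α+1) ∈ bdriesOf (F.K α))

def IsZigzagCycles (lo hi : ℕ) (z : ℕ → Chain) : Prop :=
  (∀ α, lo ≤ α → α ≤ hi → z α ∈ cyclesOf (F.K α)) ∧
  ∀ α, lo ≤ α → α < hi → StepHomologous F z α

variable {F} {i b d lo hi α : ℕ} {y z : ℕ → Chain}

lemma StepHomologous.add (hy : StepHomologous F y α) (hz : StepHomologous F z α) :
    StepHomologous F (y + z) α := by
  have e : (y + z) α + (y + z) (α+1) = (y α + y (α+1)) + (z α + z (α+1)) :=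
    add_add_add_comm _ _ _ _
  exact ⟨fun h => e ▸ add_mem (hy.1 h) (hz.1 h), fun h => e ▸ add_mem (hy.2 h) (hz.2 h)⟩

lemma stepHomologous_of_mem_bdriesOf (h₀ : y α ∈ bdriesOf (F.K α))
    (hfwd : F.K α ⊆ F.K (α+1) → y (α+1) ∈ bdriesOf (F.K (α+1)))
    (hbwd : F.K (α+1) ⊆ F.K α → y (α+1) ∈ bdriesOf (F.K α)) :
    StepHomologous F y α :=
  ⟨fun h => add_mem (bdriesOf_mono h h₀) (hfwd h), fun h => add_mem h₀ (hbwd h)⟩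

lemma IsZigzagCycles.add (hy : IsZigzagCycles F lo hi y) (hz : IsZigzagCycles F lo hi z) :
    IsZigzagCycles F lo hi (y + z) :=
  ⟨fun α h1 h2 => add_mem (hy.1 α h1 h2) (hz.1 α h1 h2),
    fun α h1 h2 => (hy.2 α h1 h2).add (hz.2 α h1 h2)⟩

lemma isZigzagCycles_of_mem_bdriesOf (h : ∀ α, lo ≤ α → α ≤ hi → y α ∈ bdriesOf (F.K α)) :
    IsZigzagCycles F lo hi y :=
  ⟨fun α h1 h2 => bdriesOf_le_cyclesOf (F.cpx α) (h α h1 h2),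
    fun α h1 h2 => stepHomologous_of_mem_bdriesOf (h α h1 h2.le)
      (fun _ => h _ (by omega) h2) (fun hs => bdriesOf_mono hs (h _ (by omega) h2))⟩

lemma IsZigzagCycles.glue {c : ℕ} (h₁ : IsZigzagCycles F lo c y)
    (h₂ : IsZigzagCycles F (c+1) hi y) (hc : StepHomologous F y c) :
    IsZigzagCycles F lo hi y := by
  refine ⟨fun α h1 h2 => ?_, fun α h1 h2 => ?_⟩
  · rcases le_or_gt α c with hα | hα
    · exact h₁.1 α h1 hα
    · exact h₂.1 α hα h2
  · rcases lt_trichotomy α c with hα | rfl | hα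
    · exact h₁.2 α h1 hα
    · exact hc
    · exact h₂.2 α hα h2

lemma IsHRep.isZigzagCycles (hz : IsHRep F i b d z) : IsZigzagCycles F b d z :=
  ⟨hz.2.2.2.2.1, hz.2.2.2.2.2.1⟩

lemma IsBRep.isZigzagCycles (hz : IsBRep F i b d z) : IsZigzagCycles F b d z := by
  refine ⟨fun α h1 h2 => bdriesOf_le_cyclesOf (F.cpx α) (hz.2.2.2.2.1 α h1 h2),
    fun α h1 h2 => ?_⟩
  have hzero : z α + z (α+1) = 0 := by rw [hz.2.2.2.2.2.1 α h1 h2, ZModModule.add_self]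
  exact ⟨fun _ => hzero ▸ zero_mem _, fun _ => hzero ▸ zero_mem _⟩

lemma IsHRep.add_of_isZigzagCycles (hz : IsHRep F i b i z) (hy : IsZigzagCycles F b i y)
    (hyb : y b ∈ bdriesOf (F.K b)) : IsHRep F i b i (z + y) := by
  have hzy := hz.isZigzagCycles.add hy
  obtain ⟨h1, hbi, -, him, -, -, ⟨hfwd, hbwd⟩, -⟩ := hz
  refine ⟨h1, hbi, le_rfl, him, hzy.1, hzy.2, ⟨fun hsub hcyc => ?_, fun hsub => ?_⟩,
    fun h => absurd h (lt_irrefl i)⟩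
  · obtain ⟨σ, hσ, hins⟩ := F.exists_insert_pred h1 (hbi.trans him) hsub
    have hyZ : y b ∈ cyclesOf (F.K (b-1)) :=
      bdriesOf_insert_le_cyclesOf (F.cpx _) (hins ▸ F.cpx b) hσ (hins ▸ hyb)
    exact hfwd hsub ((Submodule.add_mem_iff_left _ hyZ).1 hcyc)
  · obtain ⟨hzB, hzB'⟩ := hbwd hsub
    exact ⟨add_mem hzB (bdriesOf_mono hsub hyb),
      fun h => hzB' ((Submodule.add_mem_iff_left _ hyb).1 h)⟩

end ZigzagCycles

section Births

variable {m : ℕ} {F : ZZ m} {i b b' d : ℕ} {z : ℕ → Chain}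

lemma Prec.bBirthAt_or_subset_of_lt (hprec : Prec F i b b') (hlt : b' < b) :
    BBirthAt F i b ∨ F.K b ⊆ F.K (b-1) := by
  rcases hprec with ⟨h, -⟩ | ⟨-, -, h⟩ | ⟨-, -, h, -⟩ | ⟨-, -, -, h⟩
  · exact Or.inl h
  · omega
  · omega
  · exact Or.inr h

-- inserting a simplex that enlarges the boundaries cannot create a new cycle
lemma IsHRep.not_bBirthAt (hz : IsHRep F i b d z) : ¬ BBirthAt F i b := by
  rintro ⟨h1, hbi, him, hsub, hne⟩
  obtain ⟨σ, -, hins⟩ := F.exists_insert_pred h1 (hbi.trans him) hsub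
  rw [hins] at hne
  have hzb : z b ∈ cyclesOf (insert σ (F.K (b-1))) := hins ▸ hz.2.2.2.2.1 b le_rfl hz.2.1
  exact hz.2.2.2.2.2.2.1.1 hsub
    (cyclesOf_insert_le (bdrySimplex_notMem_bdriesOf_of_ne hne) hzb)

lemma mem_bdriesOf_at_birth (hprec : Prec F i b b') (hlt : b' < b)
    (hz : IsHRep F i b i z ∨ IsBRep F i b i z) :
    (F.K (b-1) ⊆ F.K b → z b ∈ bdriesOf (F.K b)) ∧
    (F.K b ⊆ F.K (b-1) → z b ∈ bdriesOf (F.K (b-1))) := by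
  have hne : F.K (b-1) ≠ F.K b := by
    rcases hz with h | h <;> exact F.pred_ne h.1 (h.2.1.trans h.2.2.2.1)
  rcases hz with hz | hz
  · have hbwd := (hprec.bBirthAt_or_subset_of_lt hlt).resolve_left hz.not_bBirthAt
    exact ⟨fun h => absurd (h.antisymm hbwd) hne, fun h => (hz.2.2.2.2.2.2.1.2 h).1⟩
  · exact ⟨fun _ => hz.2.2.2.2.1 b le_rfl hz.2.1,
      fun h => absurd (hz.2.2.2.2.2.2.1.1.antisymm h) hne⟩

end Births

theorem stmt12_general (m i b b' : ℕ) (F : ZZ m) (w : ℕ → Chain) (W W' : Finset ℕ)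
    (hprec : Prec F i b b') (hbb' : b' < b)
    (hW : IsHRep F i b i (psum w W) ∨ IsBRep F i b i (psum w W))
    (hW' : IsHRep F i b' i (psum w W'))
    (halive : AliveTill F w (W.filter (· < b)) b) :
    (∀ α, b' ≤ α → α < b →
      psum w (symmDiff W W') α + psum w W' α ∈ bdriesOf (F.K α)) ∧
    IsHRep F i b' i (psum w (symmDiff W W')) := by
  have hbdry : ∀ α < b, psum w W α ∈ bdriesOf (F.K α) := fun α hα =>
    psum_filter_lt w W hα ▸ halive α hα.le
  refine ⟨fun α _ hα => ?_, ?_⟩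
  · rw [psum_symmDiff, add_assoc, ZModModule.add_self, add_zero]
    exact hbdry α hα
  have hbirth := mem_bdriesOf_at_birth hprec hbb' hW
  obtain ⟨c, rfl⟩ : ∃ c, b = c + 1 := ⟨b - 1, by omega⟩
  rw [Nat.add_sub_cancel] at hbirth
  have hcycles : IsZigzagCycles F b' i (psum w W) :=
    (isZigzagCycles_of_mem_bdriesOf fun α _ hα => hbdry α (by omega)).glue
      (hW.elim IsHRep.isZigzagCycles IsBRep.isZigzagCycles)
      (stepHomologous_of_mem_bdriesOf (hbdry c (by omega)) hbirth.1 hbirth.2)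
  have hsum : psum w (symmDiff W W') = psum w W' + psum w W :=
    funext fun α => (psum_symmDiff w W W' α).trans (add_comm _ _)
  rw [hsum]
  exact hW'.add_of_isZigzagCycles hcycles (hbdry b' hbb')

/-- if `b ≺ b'` with `b' < b`, `W`, `W'` generate representatives for
`[b,i]`, `[b',i]`, and the wires of `W` before `b` form a boundary bundle alive till
`b`, then for `b' ≤ α < b` the cycle generated by `W ⊞ W'` at `α` is homologous in
`K_α` to the one generated by `W'`, and `W ⊞ W'` generates a representative for `[b',i]`. -/
theorem stmt12 (m i b b' : ℕ) (F : ZZ m) (w : ℕ → Chain) (W W' : Finset ℕ)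
    (hprec : Prec F i b b') (hbb' : b' < b)
    (hwires : ∀ j ∈ W ∪ W', IsWire F j (w j))
    (hW : IsHRep F i b i (psum w W) ∨ IsBRep F i b i (psum w W))
    (hW' : IsHRep F i b' i (psum w W'))
    (halive : AliveTill F w (W.filter (· < b)) b) :
    (∀ α, b' ≤ α → α < b →
      psum w (symmDiff W W') α + psum w W' α ∈ bdriesOf (F.K α)) ∧
    IsHRep F i b' i (psum w (symmDiff W W')) :=
  stmt12_general m i b b' F w W W' hprec hbb' hW hW' halive
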